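/- Under the hypotheses of the inexact descent lemma (g with L-Lipschitz gradient, (a,b)-inexact oracle with a ≤ 1/20, η ≤ 1/L, iterates y_{t+1} = y_t - ηG(y_t)), for all τ ≤ t one has ‖y_τ - y_0‖² ≤ 16ηt·((1+a)²/(1-a))·( g(y_0) - g(y_t) + (5 + η)·t·b² ). -/

import Mathlib

/-!
Each step of inexact gradient descent decreases `g` by at least `η/6 ‖G(y_s)‖²` up to an additive
`η b²`: the descent lemma `g(x + v) ≤ g x + ⟪∇g x, v⟫ + L/2 ‖v‖²` with `Lη ≤ 1` reduces this to
`⟪∇g x, G x⟫ ≥ 2/3 ‖G x‖² - b²`, which holds because for `a ≤ 1/20` the oracle error is small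
compared with `‖G x‖ + b`. Summing, `η Σ_{s<t} ‖G(y_s)‖²` is controlled by `g(y_0) - g(y_t)`,
while by Cauchy–Schwarz `‖y_τ - y_0‖² ≤ t η² Σ_{s<t} ‖G(y_s)‖²` for `τ ≤ t`.
-/

open Finset Set

theorem le_add_deriv_add_half_of_deriv_le {φ φ' : ℝ → ℝ} {C : ℝ}
    (hφ : ∀ t, HasDerivAt φ (φ' t) t) (hφ' : ∀ t ∈ Ico (0 : ℝ) 1, φ' t ≤ φ' 0 + C * t) :
    φ 1 ≤ φ 0 + φ' 0 + C / 2 := by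
  have hB (t : ℝ) :
      HasDerivAt (fun t ↦ φ 0 + t * φ' 0 + C / 2 * t ^ 2) (φ' 0 + C * t) t := by
    have h := (((hasDerivAt_id' t).mul_const (φ' 0)).const_add (φ 0)).add
      ((hasDerivAt_pow 2 t).const_mul (C / 2))
    exact h.congr_deriv (by ring)
  have := image_le_of_deriv_right_le_deriv_boundary
    (fun t _ ↦ (hφ t).continuousAt.continuousWithinAt)
    (fun t _ ↦ (hφ t).hasDerivWithinAt) (by simp)
    (fun t _ ↦ (hB t).continuousAt.continuousWithinAt)
    (fun t _ ↦ (hB t).hasDerivWithinAt) hφ' (right_mem_Icc.2 zero_le_one)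
  simpa using this

section InnerProductSpace

variable {E : Type*} [NormedAddCommGroup E] [InnerProductSpace ℝ E]

theorem two_div_three_mul_norm_sq_sub_sq_le_inner {u w : E} {a b : ℝ} (ha : a ≤ 1 / 20)
    (hw : ‖w - u‖ ≤ a * ‖u‖ + b) :
    2 / 3 * ‖w‖ ^ 2 - b ^ 2 ≤ inner ℝ u w := by
  have hu : ‖u‖ ≤ ‖w‖ + ‖w - u‖ := by simpa using norm_sub_le w (w - u)
  have hau : 19 * (a * ‖u‖) ≤ ‖w‖ + b := by nlinarith [norm_nonneg u]
  have hcross : inner ℝ (w - u) w ≤ (a * ‖u‖ + b) * ‖w‖ :=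
    (real_inner_le_norm _ _).trans (by gcongr)
  have hsplit : inner ℝ u w = ‖w‖ ^ 2 - inner ℝ (w - u) w := by
    rw [inner_sub_left, real_inner_self_eq_norm_sq]; ring
  -- 16 N² - 60 b N + 57 b² = (4 N - 15 b / 2)² + 3 b² / 4 with N = ‖w‖
  nlinarith [mul_le_mul_of_nonneg_right hau (norm_nonneg w), sq_nonneg (8 * ‖w‖ - 15 * b)]

variable [CompleteSpace E] {f : E → ℝ} {f' : E → E} {L : ℝ}

theorem le_add_inner_add_of_lipschitz_gradient (hf : ∀ x, HasGradientAt f (f' x) x)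
    (hL : ∀ x y, ‖f' x - f' y‖ ≤ L * ‖x - y‖) (x v : E) :
    f (x + v) ≤ f x + inner ℝ (f' x) v + L / 2 * ‖v‖ ^ 2 := by
  have hline (t : ℝ) :
      HasDerivAt (fun t : ℝ ↦ f (x + t • v)) (inner ℝ (f' (x + t • v)) v) t := by
    have hc : HasDerivAt (fun t : ℝ ↦ x + t • v) v t := by
      simpa using ((hasDerivAt_id t).smul_const v).const_add x
    have h := (hf (x + t • v)).hasFDerivAt.comp_hasDerivAt t hc
    simp only [InnerProductSpace.toDual_apply_apply] at h
    exact h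
  have hslope : ∀ t ∈ Ico (0 : ℝ) 1,
      inner ℝ (f' (x + t • v)) v ≤ inner ℝ (f' (x + (0 : ℝ) • v)) v + L * ‖v‖ ^ 2 * t := by
    intro t ht
    have key : inner ℝ (f' (x + t • v) - f' x) v ≤ L * ‖v‖ ^ 2 * t := calc
      _ ≤ ‖f' (x + t • v) - f' x‖ * ‖v‖ := real_inner_le_norm _ _
      _ ≤ L * ‖t • v‖ * ‖v‖ := by
          gcongr
          simpa using hL (x + t • v) x
      _ = L * ‖v‖ ^ 2 * t := by
          rw [norm_smul, Real.norm_of_nonneg ht.1]; ring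
    rw [zero_smul, add_zero]
    linarith [inner_sub_left (𝕜 := ℝ) (f' (x + t • v)) (f' x) v]
  simpa [mul_div_right_comm] using le_add_deriv_add_half_of_deriv_le hline hslope

theorem le_sub_of_inexact_gradient_step {a b η : ℝ}
    (hf : ∀ x, HasGradientAt f (f' x) x) (hL : ∀ x y, ‖f' x - f' y‖ ≤ L * ‖x - y‖)
    (hη : 0 ≤ η) (hLη : L * η ≤ 1) (ha : a ≤ 1 / 20) {x w : E}
    (hw : ‖w - f' x‖ ≤ a * ‖f' x‖ + b) :
    f (x - η • w) ≤ f x - η / 6 * ‖w‖ ^ 2 + η * b ^ 2 := by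
  have hdesc := le_add_inner_add_of_lipschitz_gradient hf hL x (-(η • w))
  rw [← sub_eq_add_neg, inner_neg_right, real_inner_smul_right, norm_neg, norm_smul,
    Real.norm_of_nonneg hη] at hdesc
  have hinner := two_div_three_mul_norm_sq_sub_sq_le_inner ha hw
  nlinarith [mul_le_mul_of_nonneg_left hinner hη,
    mul_nonneg (sub_nonneg.2 hLη) (mul_nonneg hη (sq_nonneg ‖w‖))]

end InnerProductSpace

theorem mul_sum_range_le_sub_add_of_le_sub_add {F e : ℕ → ℝ} {c r : ℝ}
    (h : ∀ s, F (s + 1) ≤ F s - c * e s + r) (n : ℕ) :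
    c * ∑ s ∈ range n, e s ≤ F 0 - F n + n * r := by
  induction n with
  | zero => simp
  | succ n ih =>
    rw [sum_range_succ, mul_add]
    push_cast
    linarith [h n]

theorem dist_sq_le_mul_sum_dist_sq {X : Type*} [PseudoMetricSpace X] (y : ℕ → X) {m n : ℕ}
    (hmn : m ≤ n) : dist (y 0) (y m) ^ 2 ≤ n * ∑ s ∈ range n, dist (y s) (y (s + 1)) ^ 2 := by
  calc dist (y 0) (y m) ^ 2 ≤ (∑ s ∈ range m, dist (y s) (y (s + 1))) ^ 2 := by
        gcongr
        exact dist_le_range_sum_dist y m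
    _ ≤ m * ∑ s ∈ range m, dist (y s) (y (s + 1)) ^ 2 := by
        simpa using sq_sum_le_card_mul_sum_sq (s := range m)
    _ ≤ n * ∑ s ∈ range n, dist (y s) (y (s + 1)) ^ 2 := by
        gcongr

theorem one_le_one_add_sq_div_one_sub {a : ℝ} (ha0 : 0 ≤ a) (ha1 : a < 1) :
    1 ≤ (1 + a) ^ 2 / (1 - a) := by
  rw [one_le_div (by linarith)]
  nlinarith

theorem improve_or_localize_general {d : ℕ}
    (g : EuclideanSpace ℝ (Fin d) → ℝ) (g' G : EuclideanSpace ℝ (Fin d) → EuclideanSpace ℝ (Fin d))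
    (L a b η : ℝ) (hL : 0 < L)
    (hgrad : ∀ x, HasGradientAt g (g' x) x)
    (hLip : ∀ x y, ‖g' x - g' y‖ ≤ L * ‖x - y‖)
    (ha0 : 0 ≤ a) (ha : a ≤ 1/20)
    (hη0 : 0 < η) (hη : η ≤ 1 / L)
    (horacle : ∀ x, ‖G x - g' x‖ ≤ a * ‖g' x‖ + b)
    (y : ℕ → EuclideanSpace ℝ (Fin d))
    (hiter : ∀ t, y (t + 1) = y t - η • G (y t)) :
    ∀ τ t : ℕ, τ ≤ t →
      ‖y τ - y 0‖^2 ≤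
        16 * η * t * ((1 + a)^2 / (1 - a)) * (g (y 0) - g (y t) + (5 + η) * t * b^2) := by
  intro τ t hτt
  have hLη : L * η ≤ 1 := by rwa [le_div_iff₀ hL, mul_comm] at hη
  have hstep (s : ℕ) : g (y (s + 1)) ≤ g (y s) - η / 6 * ‖G (y s)‖ ^ 2 + η * b ^ 2 := by
    rw [hiter]
    exact le_sub_of_inexact_gradient_step hgrad hLip hη0.le hLη ha (horacle _)
  set S := ∑ s ∈ range t, ‖G (y s)‖ ^ 2
  have hdecrease : η / 6 * S ≤ g (y 0) - g (y t) + t * (η * b ^ 2) :=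
    mul_sum_range_le_sub_add_of_le_sub_add (F := fun s ↦ g (y s)) hstep t
  have hloc : ‖y τ - y 0‖ ^ 2 ≤ t * (η ^ 2 * S) := by
    have h := dist_sq_le_mul_sum_dist_sq y hτt
    simp only [dist_eq_norm, hiter, sub_sub_cancel, norm_smul, Real.norm_of_nonneg hη0.le,
      mul_pow, ← mul_sum, norm_sub_rev (y 0)] at h
    exact h
  have hK := one_le_one_add_sq_div_one_sub ha0 (by linarith)
  set K := (1 + a) ^ 2 / (1 - a)
  set Δ := g (y 0) - g (y t)
  have hηt : 0 ≤ η * t := mul_nonneg hη0.le t.cast_nonneg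
  have hX : 0 ≤ Δ + t * (η * b ^ 2) := hdecrease.trans' (by positivity)
  calc ‖y τ - y 0‖ ^ 2 ≤ 6 * (η * t) * (η / 6 * S) := by linarith
    _ ≤ 6 * (η * t) * (Δ + t * (η * b ^ 2)) := by gcongr
    _ ≤ 16 * η * t * K * (Δ + (5 + η) * t * b ^ 2) := by
      linarith [mul_nonneg (mul_nonneg (by linarith : 0 ≤ 16 * K - 6) hηt) hX,
        mul_nonneg (mul_nonneg (by linarith : 0 ≤ K) hηt) (mul_nonneg t.cast_nonneg (sq_nonneg b))]

theorem improve_or_localize {d : ℕ}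
    (g : EuclideanSpace ℝ (Fin d) → ℝ) (g' G : EuclideanSpace ℝ (Fin d) → EuclideanSpace ℝ (Fin d))
    (L a b η : ℝ) (hL : 0 < L)
    (hgrad : ∀ x, HasGradientAt g (g' x) x)
    (hLip : ∀ x y, ‖g' x - g' y‖ ≤ L * ‖x - y‖)
    (ha0 : 0 ≤ a) (ha : a ≤ 1/20) (hb : 0 ≤ b)
    (hη0 : 0 < η) (hη : η ≤ 1 / L)
    (horacle : ∀ x, ‖G x - g' x‖ ≤ a * ‖g' x‖ + b)
    (y : ℕ → EuclideanSpace ℝ (Fin d))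
    (hiter : ∀ t, y (t + 1) = y t - η • G (y t)) :
    ∀ τ t : ℕ, τ ≤ t →
      ‖y τ - y 0‖^2 ≤
        16 * η * t * ((1 + a)^2 / (1 - a)) * (g (y 0) - g (y t) + (5 + η) * t * b^2) :=
  improve_or_localize_general g g' G L a b η hL hgrad hLip ha0 ha hη0 hη horacle y hiter
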